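/- arXiv:2201.07553 — 2 statements merged into one kernel-verified Lean document; each statement's English description precedes it below -/
import Mathlib

section
/- Let G be a group of order n and let S' = {D₁, …, D_m} be a collection of m pairwise disjoint k-subsets of G* with S = ⋃ᵢ Dᵢ. If S' is simultaneously an (n, m, k, λ*, μ*)-disjoint partial difference family and an (n, m, k, λ, μ)-external partial difference family, then S is an (n, mk, λ+λ*, μ+μ*)-partial difference set when λ+λ* ≠ μ+μ*, and S is an (n, mk, σ)-difference set when λ+λ* = μ+μ* = σ. -/
open Finset

section Defs

variable {G : Type*} [AddGroup G] [DecidableEq G]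

/-- The multiset of internal differences `x - y` (`x ≠ y`) of a finset. -/
def intDiff (D : Finset G) : Multiset G :=
  ((D ×ˢ D).filter fun p => p.1 ≠ p.2).val.map fun p => p.1 - p.2

/-- The multiset of external differences `x - y`, `x ∈ D₁`, `y ∈ D₂`. -/
def extDiff (D₁ D₂ : Finset G) : Multiset G :=
  (D₁ ×ˢ D₂).val.map fun p => p.1 - p.2

variable {ι : Type*} [Fintype ι] [DecidableEq ι]

/-- The multiset of all internal differences of a family of sets. -/
def famInt (D : ι → Finset G) : Multiset G := ∑ i, intDiff (D i)

/-- The multiset of all external differences between distinct members of a family of sets. -/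
def famExt (D : ι → Finset G) : Multiset G :=
  ∑ i, ∑ j, if j = i then 0 else extDiff (D i) (D j)

/-- The union of the members of a family of sets. -/
def famU (D : ι → Finset G) : Finset G := Finset.univ.biUnion D

variable [Fintype G]

/-- `D` is an `(n,k,λ)`-difference set: `Δ(D) = λ(G*)`. -/
def IsDS (n k : ℕ) (lam : ℤ) (D : Finset G) : Prop :=
  Fintype.card G = n ∧ D.card = k ∧
    ∀ x : G, ((intDiff D).count x : ℤ) = if x = 0 then 0 else lam

/-- `P` is an `(n,k,λ,μ)`-partial difference set: `Δ(P) = λ(P) + μ(G* \ P)`. -/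
def IsPDS (n k : ℕ) (lam mu : ℤ) (P : Finset G) : Prop :=
  Fintype.card G = n ∧ P.card = k ∧
    ∀ x : G, ((intDiff P).count x : ℤ) =
      if x ∈ P then lam else if x = 0 then 0 else mu

/-- `D` is a family of `m` pairwise disjoint `k`-subsets of a group of order `n`. -/
def FamShape (n m k : ℕ) (D : ι → Finset G) : Prop :=
  Fintype.card G = n ∧ Fintype.card ι = m ∧ (∀ i, (D i).card = k) ∧
    ∀ i j, i ≠ j → Disjoint (D i) (D j)

/-- `(n,m,k,λ)`-disjoint difference family: `⋃ᵢ Δ(Dᵢ) = λ(G*)`. -/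
def IsDDF (n m k : ℕ) (lam : ℤ) (D : ι → Finset G) : Prop :=
  FamShape n m k D ∧
    ∀ x : G, ((famInt D).count x : ℤ) = if x = 0 then 0 else lam

/-- `(n,m,k,λ)`-external difference family: `⋃_{i≠j} Δ(Dᵢ,Dⱼ) = λ(G*)`. -/
def IsEDF (n m k : ℕ) (lam : ℤ) (D : ι → Finset G) : Prop :=
  FamShape n m k D ∧
    ∀ x : G, ((famExt D).count x : ℤ) = if x = 0 then 0 else lam

/-- `(n,m,k,λ,μ)`-disjoint partial difference family:
sets in `G*`, `⋃ᵢ Δ(Dᵢ) = λ(S) + μ(G* \ S)` where `S = ⋃ᵢ Dᵢ`. -/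
def IsDPDF (n m k : ℕ) (lam mu : ℤ) (D : ι → Finset G) : Prop :=
  FamShape n m k D ∧ (∀ i, (0 : G) ∉ D i) ∧
    ∀ x : G, ((famInt D).count x : ℤ) =
      if x ∈ famU D then lam else if x = 0 then 0 else mu

/-- `(n,m,k,λ,μ)`-external partial difference family:
sets in `G*`, `⋃_{i≠j} Δ(Dᵢ,Dⱼ) = λ(S) + μ(G* \ S)` where `S = ⋃ᵢ Dᵢ`. -/
def IsEPDF (n m k : ℕ) (lam mu : ℤ) (D : ι → Finset G) : Prop :=
  FamShape n m k D ∧ (∀ i, (0 : G) ∉ D i) ∧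
    ∀ x : G, ((famExt D).count x : ℤ) =
      if x ∈ famU D then lam else if x = 0 then 0 else mu

end Defs

section FieldDefs

variable {F : Type*} [Field F] [DecidableEq F]

/-- `α` is a primitive element: every nonzero element is a power of `α`. -/
def IsPrimitiveElt (α : F) : Prop := ∀ x : F, x ≠ 0 → ∃ k : ℕ, x = α ^ k

/-- The coset `α^i⟨α^e⟩` of the cyclotomic class of order `e` (of size `f`). -/
def cyclo (α : F) (e f i : ℕ) : Finset F :=
  (Finset.range f).image fun j => α ^ (i + e * j)

/-- The cyclotomic number `(i,j)_e`: the number of pairs `(zᵢ, zⱼ) ∈ Cᵢ × Cⱼ` with `zᵢ + 1 = zⱼ`. -/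
def cycNum (α : F) (e f i j : ℕ) : ℕ :=
  ((cyclo α e f i ×ˢ cyclo α e f j).filter fun p => p.1 + 1 = p.2).card

/-- `Φᵢ = {x ∈ C₀^e : x ≠ 1, x - 1 ∈ α^i C₀^ε}`. -/
def Phi (α : F) (e f ε ρ i : ℕ) : Finset F :=
  (cyclo α e f 0).filter fun x => x ≠ 1 ∧ x - 1 ∈ cyclo α ε ρ i

/-- `φᵢ = |Φᵢ|`. -/
def phi (α : F) (e f ε ρ i : ℕ) : ℕ := (Phi α e f ε ρ i).card

end FieldDefs

/-!
Sorting the pairs `(x, y) ∈ S × S` by the blocks `Dᵢ ∋ x`, `Dⱼ ∋ y` shows that the internal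
differences of `S` are those of the `Dᵢ` together with the external differences between distinct
blocks. Adding the DPDF and EPDF counts therefore gives the PDS counts of `S`, and when
`λ + λ* = μ + μ*` these are the DS counts, since `0 ∉ S`.
-/

section DifferenceMultisets

open Function

variable {G : Type*} [AddGroup G] [DecidableEq G]

def pairDiff (P : Finset (G × G)) : Multiset G :=
  (P.filter fun p => p.1 ≠ p.2).val.map fun p => p.1 - p.2

theorem intDiff_eq_pairDiff (D : Finset G) : intDiff D = pairDiff (D ×ˢ D) := rfl

theorem extDiff_eq_pairDiff {A B : Finset G} (h : Disjoint A B) :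
    extDiff A B = pairDiff (A ×ˢ B) := by
  rw [pairDiff, filter_true_of_mem fun p hp => ?_, extDiff]
  rw [mem_product] at hp
  exact ne_of_mem_of_not_mem hp.1 (disjoint_right.mp h hp.2)

theorem pairDiff_disjiUnion {ι : Type*} (s : Finset ι) (P : ι → Finset (G × G))
    (h : (s : Set ι).PairwiseDisjoint P) :
    pairDiff (s.disjiUnion P h) = ∑ i ∈ s, pairDiff (P i) := by
  simp only [pairDiff, filter_val, disjiUnion_val, Multiset.filter_bind,
    Multiset.map_bind]
  rfl

variable {ι : Type*} [Fintype ι] [DecidableEq ι]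

theorem intDiff_famU (D : ι → Finset G) (h : Pairwise (Disjoint on D)) :
    intDiff (famU D) = famInt D + famExt D := by
  have hprod : (Set.univ : Set (ι × ι)).PairwiseDisjoint fun q => D q.1 ×ˢ D q.2 := by
    rintro ⟨i, j⟩ - ⟨i', j'⟩ - hne
    rw [onFun, disjoint_product]
    by_cases hi : i = i'
    · exact Or.inr (h fun hj => hne (Prod.ext hi hj))
    · exact Or.inl (h hi)
  have hsplit : ∀ i j, pairDiff (D i ×ˢ D j) =
      (if j = i then intDiff (D i) else 0) + (if j = i then 0 else extDiff (D i) (D j)) := by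
    intro i j
    split_ifs with hji
    · rw [hji, intDiff_eq_pairDiff, add_zero]
    · rw [extDiff_eq_pairDiff (h (Ne.symm hji)), zero_add]
  have hunion : famU D ×ˢ famU D =
      (univ : Finset (ι × ι)).disjiUnion (fun q => D q.1 ×ˢ D q.2) (by simpa using hprod) := by
    ext ⟨x, y⟩
    simp [famU]
  rw [intDiff_eq_pairDiff, hunion, pairDiff_disjiUnion, Fintype.sum_prod_type]
  simp only [hsplit, sum_add_distrib, sum_ite_eq', mem_univ, if_true]
  rfl

end DifferenceMultisets

theorem IsPDS.isDS {G : Type*} [AddGroup G] [DecidableEq G] [Fintype G] {n k : ℕ} {lam : ℤ}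
    {P : Finset G} (h : IsPDS n k lam lam P) (h0 : (0 : G) ∉ P) : IsDS n k lam P := by
  refine ⟨h.1, h.2.1, fun x => ?_⟩
  rw [h.2.2 x]
  split_ifs with hxP hx0 hx0 <;> first | rfl | exact absurd (hx0 ▸ hxP) h0

section Families

variable {G : Type*} [DecidableEq G] {ι : Type*} [Fintype ι] {D : ι → Finset G} {n m k : ℕ}

theorem zero_notMem_famU [Zero G] (h : ∀ i, (0 : G) ∉ D i) : (0 : G) ∉ famU D := by
  simpa [famU] using h

theorem FamShape.card_famU [Fintype G] (h : FamShape n m k D) : (famU D).card = m * k := by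
  obtain ⟨-, hm, hk, hdisj⟩ := h
  rw [famU, card_biUnion fun i _ j _ hij => hdisj i j hij]
  simp [hk, hm]

theorem isPDS_famU_of_isDPDF_of_isEPDF [AddGroup G] [Fintype G] [DecidableEq ι]
    {lamStar muStar lam mu : ℤ}
    (hI : IsDPDF n m k lamStar muStar D) (hE : IsEPDF n m k lam mu D) :
    IsPDS n (m * k) (lam + lamStar) (mu + muStar) (famU D) := by
  obtain ⟨hshape, -, hIcount⟩ := hI
  refine ⟨hshape.1, hshape.card_famU, fun x => ?_⟩
  rw [intDiff_famU D hshape.2.2.2, Multiset.count_add, Nat.cast_add, hIcount, hE.2.2]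
  split_ifs <;> ring

end Families

/-- Theorem: if a family of `m` pairwise disjoint `k`-subsets of `G*` is simultaneously an
`(n,m,k,λ*,μ*)`-DPDF and an `(n,m,k,λ,μ)`-EPDF, then its union `S` is an
`(n,m*k,λ+λ*,μ+μ*)`-PDS when `λ+λ* ≠ μ+μ*`, and an `(n,m*k,σ)`-DS when `λ+λ* = μ+μ* = σ`. -/
theorem dpdf_and_epdf_union_pds {G : Type*} [AddGroup G] [DecidableEq G] [Fintype G]
    (n m k : ℕ) (lamStar muStar lam mu : ℤ) (D : Fin m → Finset G)
    (hDPDF : IsDPDF n m k lamStar muStar D)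
    (hEPDF : IsEPDF n m k lam mu D) :
    (lam + lamStar ≠ mu + muStar → IsPDS n (m * k) (lam + lamStar) (mu + muStar) (famU D)) ∧
    (lam + lamStar = mu + muStar → IsDS n (m * k) (lam + lamStar) (famU D)) := by
  have hS := isPDS_famU_of_isDPDF_of_isEPDF hDPDF hEPDF
  refine ⟨fun _ => hS, fun hσ => IsPDS.isDS ?_ (zero_notMem_famU hDPDF.2.1)⟩
  rwa [← hσ] at hS
end

section
/- Let q = ef + 1 be a prime power with e, f > 1 and let C₀^e = ⟨α^e⟩ be the cyclotomic class of order e containing 1. Then C₀^e is a (q, f, f−1, 0)-partial difference set if and only if C₀^e ∪ {0} is a subfield of GF(q). In this case q = p^β is a prime power which is not prime, f = p^r − 1 for some proper divisor r of β, and e = (q−1)/(p^r − 1). -/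
open Finset

/-!
Since `α` has order `ef`, `C₀^e` is the group of `f`-th roots of unity, so `C₀^e ∪ {0}` is the
solution set of `x ^ (f + 1) = x`; it is closed under products and inverses and hence a subfield
as soon as it is an additive subgroup. On the other hand a partial difference set with `μ = 0`
contains every difference of two of its distinct elements, and for a set `P ∌ 0` with `|P| ≥ 2`
this says exactly that `P ∪ {0}` is a subgroup, in which case `λ = |P| - 1`. The numerical
conclusions express `|C₀^e ∪ {0}| = f + 1` as the order `p ^ r` of a subfield of `GF(p ^ β)`,
where `r ∣ β`, and `r < β` because `e > 1`.
-/

open Polynomial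

section PartialDifferenceSet

variable {G : Type*} [AddGroup G] [DecidableEq G]

theorem count_intDiff_zero (P : Finset G) : (intDiff P).count 0 = 0 := by
  simp only [intDiff, Multiset.count_eq_zero, Multiset.mem_map, Finset.mem_val, Finset.mem_filter,
    not_exists, not_and, and_imp]
  exact fun p _ hne h => hne (sub_eq_zero.mp h)

theorem count_intDiff_of_ne_zero (P : Finset G) {x : G} (hx : x ≠ 0) :
    (intDiff P).count x = #{b ∈ P | x + b ∈ P} := by
  rw [intDiff, Multiset.count_map, ← Finset.filter_val, Finset.filter_filter, Finset.card_val]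
  refine Finset.card_bij' (fun p _ => p.2) (fun b _ => (x + b, b)) ?_ ?_ ?_ ?_
  · rintro ⟨a, b⟩ hab
    simp only [Finset.mem_filter, Finset.mem_product] at hab ⊢
    obtain ⟨⟨ha, hb⟩, -, rfl⟩ := hab
    exact ⟨hb, by simpa using ha⟩
  · intro b hb
    simp only [Finset.mem_filter, Finset.mem_product] at hb ⊢
    exact ⟨⟨hb.2, hb.1⟩, by simpa using hx, (add_sub_cancel_right x b).symm⟩
  · rintro ⟨a, b⟩ hab
    simp only [Finset.mem_filter] at hab
    simp [hab.2.2]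
  · intro b _
    rfl

theorem isPDS_of_addSubgroup [Fintype G] {P : Finset G} (H : AddSubgroup G)
    (hH : (H : Set G) = insert 0 P) (h0 : 0 ∉ P) :
    IsPDS (Fintype.card G) #P ((#P : ℤ) - 1) 0 P := by
  have hmem : ∀ y, y ∈ H ↔ y = 0 ∨ y ∈ P := fun y => by
    rw [← SetLike.mem_coe, hH, Finset.coe_insert, Set.mem_insert_iff, Finset.mem_coe]
  have hmemP : ∀ y ∈ H, y ≠ 0 → y ∈ P := fun y hy hy0 => ((hmem y).mp hy).resolve_left hy0
  refine ⟨rfl, rfl, fun x => ?_⟩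
  by_cases hx0 : x = 0
  · simp [hx0, count_intDiff_zero, h0]
  rw [count_intDiff_of_ne_zero P hx0, if_neg hx0]
  have hxH : ∀ b ∈ P, x + b ∈ H ↔ x ∈ H := fun b hb =>
    H.add_mem_cancel_right ((hmem b).mpr (Or.inr hb))
  split_ifs with hx
  · have hfilter : {b ∈ P | x + b ∈ P} = P.erase (-x) := by
      ext b
      simp only [Finset.mem_filter, Finset.mem_erase]
      constructor
      · rintro ⟨hb, hxb⟩
        exact ⟨fun h => h0 (by rwa [h, add_neg_cancel] at hxb), hb⟩
      · rintro ⟨hb, hbP⟩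
        refine ⟨hbP, hmemP _ ((hxH b hbP).mpr ((hmem x).mpr (Or.inr hx))) ?_⟩
        exact fun h => hb (eq_neg_of_add_eq_zero_right h)
    have hnegx : -x ∈ P := hmemP _ (H.neg_mem ((hmem x).mpr (Or.inr hx))) (neg_ne_zero.mpr hx0)
    rw [hfilter, Finset.card_erase_of_mem hnegx, Nat.cast_pred (Finset.card_pos.mpr ⟨x, hx⟩)]
  · rw [Nat.cast_eq_zero, Finset.card_eq_zero, Finset.filter_eq_empty_iff]
    exact fun b hb hxb => hx (hmemP x ((hxH b hb).mp ((hmem _).mpr (Or.inr hxb))) hx0)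

end PartialDifferenceSet

theorem IsPDS.exists_addSubgroup {G : Type*} [AddCommGroup G] [Fintype G] [DecidableEq G]
    {n k : ℕ} {lam : ℤ} {P : Finset G}
    (hP : IsPDS n k lam 0 P) (h0 : 0 ∉ P) (htwo : 1 < #P) :
    ∃ H : AddSubgroup G, (H : Set G) = insert 0 P := by
  have hsub : ∀ a ∈ P, ∀ b ∈ P, a ≠ b → a - b ∈ P := by
    intro a ha b hb hab
    by_contra hx
    have hcount := hP.2.2 (a - b)
    rw [if_neg hx, if_neg (sub_ne_zero.mpr hab), Nat.cast_eq_zero,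
      count_intDiff_of_ne_zero P (sub_ne_zero.mpr hab), Finset.card_eq_zero,
      Finset.filter_eq_empty_iff] at hcount
    exact hcount hb (by simpa using ha)
  have hneg : ∀ b ∈ P, -b ∈ P := by
    -- `-b = (a - b) - a` for any `a ≠ b` in `P`
    intro b hb
    obtain ⟨a, ha, hab⟩ := Finset.exists_mem_ne htwo b
    have hne : a - b ≠ a := fun h => h0 (by rwa [sub_eq_self.mp h] at hb)
    simpa using hsub _ (hsub a ha b hb hab) a ha hne
  refine ⟨AddSubgroup.ofSub _ ⟨0, Finset.mem_insert_self 0 P⟩ ?_, rfl⟩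
  intro x hx y hy
  rw [← sub_eq_add_neg]
  simp only [Finset.coe_insert, Set.mem_insert_iff, Finset.mem_coe] at hx hy ⊢
  by_cases hxy : x = y
  · simp [hxy]
  rcases hy with rfl | hy
  · simpa using hx
  rcases hx with rfl | hx
  · simp [hneg y hy]
  · exact Or.inr (hsub x hx y hy hxy)

section FiniteField

variable {F : Type*} [Field F]

theorem IsPrimitiveElt.ne_zero [Fintype F] [DecidableEq F] {α : F} (hα : IsPrimitiveElt α)
    (hcard : 2 < Fintype.card F) : α ≠ 0 := by
  rintro rfl
  have hsub : (Finset.univ : Finset F) ⊆ {0, 1} := fun x _ => by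
    by_cases hx : x = 0
    · simp [hx]
    obtain ⟨k, rfl⟩ := hα x hx
    rcases k with _ | k <;> simp_all
  have := (Finset.card_le_card hsub).trans Finset.card_le_two
  rw [Finset.card_univ] at this
  omega

theorem IsPrimitiveElt.isPrimitiveRoot {α : F} (hα : IsPrimitiveElt α) (hα0 : α ≠ 0) :
    IsPrimitiveRoot α (Nat.card F - 1) := by
  rw [IsPrimitiveRoot.iff_orderOf, ← Nat.card_units, show α = (Units.mk0 α hα0 : F) from rfl, orderOf_units]
  refine orderOf_eq_card_of_forall_mem_zpowers fun u => ?_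
  obtain ⟨k, hk⟩ := hα u u.ne_zero
  exact Subgroup.mem_zpowers_iff.mpr ⟨k, Units.ext (by simp [hk])⟩

theorem cyclo_zero_eq_nthRootsFinset [DecidableEq F] {α : F} {e f : ℕ}
    (h : IsPrimitiveRoot (α ^ e) f) (hf : 0 < f) : cyclo α e f 0 = nthRootsFinset f (1 : F) := by
  have : NeZero f := ⟨hf.ne'⟩
  ext x
  simp only [cyclo, zero_add, pow_mul, Finset.mem_image, Finset.mem_range, mem_nthRootsFinset hf]
  constructor
  · rintro ⟨j, -, rfl⟩
    rw [← pow_mul, mul_comm, pow_mul, h.pow_eq_one, one_pow]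
  · exact h.eq_pow_of_pow_eq_one

theorem coe_insert_zero_nthRootsFinset [DecidableEq F] {f : ℕ} (hf : 0 < f) :
    ((insert 0 (nthRootsFinset f (1 : F)) : Finset F) : Set F) = {x | x ^ (f + 1) = x} := by
  ext x
  rw [Set.mem_ofPred_eq, pow_succ', mul_right_eq_self₀, Finset.coe_insert, Set.mem_insert_iff,
    Finset.mem_coe, mem_nthRootsFinset hf, or_comm]

theorem exists_subfield_of_coe_addSubgroup_eq_setOf_pow_eq_self {H : AddSubgroup F} {m : ℕ}
    (hH : (H : Set F) = {x | x ^ m = x}) : ∃ S : Subfield F, (S : Set F) = H := by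
  have hmem : ∀ x, x ∈ H ↔ x ^ m = x := fun x => by rw [← SetLike.mem_coe, hH, Set.mem_ofPred_eq]
  refine ⟨{ H with
    mul_mem' := fun {x y} hx hy => (hmem _).mpr (by rw [mul_pow, (hmem x).mp hx, (hmem y).mp hy])
    one_mem' := (hmem 1).mpr (one_pow m)
    inv_mem' := fun x hx => (hmem _).mpr (by rw [inv_pow, (hmem x).mp hx]) }, rfl⟩

theorem Subfield.exists_dvd_card_eq_pow [Fintype F] {p β : ℕ} (hp : p.Prime)
    (hF : Fintype.card F = p ^ β) (S : Subfield F) :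
    ∃ r, r ∣ β ∧ 0 < r ∧ Nat.card S = p ^ r := by
  have : Fact p.Prime := ⟨hp⟩
  have : CharP F p := charP_of_card_eq_prime_pow hF
  have : Fintype S := Fintype.ofFinite S
  obtain ⟨r, -, hS⟩ := FiniteField.card S p
  have hpow : p ^ β = p ^ ((r : ℕ) * Module.finrank S F) := by
    rw [← hF, Module.card_eq_pow_finrank (K := S), hS, pow_mul]
  exact ⟨r, ⟨_, Nat.pow_right_injective hp.two_le hpow⟩, r.pos, by rw [Nat.card_eq_fintype_card, hS]⟩

theorem isPDS_iff_exists_subfield [Fintype F] [DecidableEq F] {P : Finset F} {m : ℕ}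
    (hP : ((insert 0 P : Finset F) : Set F) = {x | x ^ m = x}) (h0 : 0 ∉ P) (htwo : 1 < #P) :
    IsPDS (Fintype.card F) #P ((#P : ℤ) - 1) 0 P ↔
      ∃ S : Subfield F, (S : Set F) = ↑(insert 0 P) := by
  refine ⟨fun hPDS => ?_, fun ⟨S, hS⟩ => isPDS_of_addSubgroup S.toAddSubgroup hS h0⟩
  obtain ⟨H, hH⟩ := hPDS.exists_addSubgroup h0 htwo
  obtain ⟨S, hS⟩ := exists_subfield_of_coe_addSubgroup_eq_setOf_pow_eq_self (hH.trans hP)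
  exact ⟨S, hS.trans hH⟩

end FiniteField

theorem cyclo_pds_iff_subfield_general {F : Type*} [Field F] [Fintype F] [DecidableEq F]
    (q e f p beta : ℕ) (α : F)
    (hq : Fintype.card F = q) (hα : IsPrimitiveElt α)
    (hef : q = e * f + 1) (he : 1 < e) (hf : 1 < f)
    (hp : p.Prime) (hpq : q = p ^ beta) :
    (IsPDS q f ((f : ℤ) - 1) 0 (cyclo α e f 0) ↔
      ∃ S : Subfield F, (S : Set F) = ↑(insert (0 : F) (cyclo α e f 0))) ∧
    (IsPDS q f ((f : ℤ) - 1) 0 (cyclo α e f 0) →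
      ¬ q.Prime ∧ ∃ r, r ∣ beta ∧ r ≠ beta ∧ 0 < r ∧
        f = p ^ r - 1 ∧ e * (p ^ r - 1) = q - 1) := by
  have he0 : 0 < e := by omega
  have hf0 : 0 < f := by omega
  have hcard : 2 < Fintype.card F := by rw [hq, hef]; nlinarith
  have hroot : IsPrimitiveRoot α (e * f) := by
    simpa [Nat.card_eq_fintype_card, hq, hef] using hα.isPrimitiveRoot (hα.ne_zero hcard)
  have hprim : IsPrimitiveRoot (α ^ e) f := by
    simpa [he0.ne'] using hroot.pow_of_dvd he0.ne' (dvd_mul_right e f)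
  have hC := cyclo_zero_eq_nthRootsFinset hprim hf0
  have hcardC : #(cyclo α e f 0) = f := hC ▸ hprim.card_nthRootsFinset
  have h0C : 0 ∉ cyclo α e f 0 := by simp [hC, mem_nthRootsFinset hf0, hf0.ne']
  have hiff : IsPDS q f ((f : ℤ) - 1) 0 (cyclo α e f 0) ↔
      ∃ S : Subfield F, (S : Set F) = ↑(insert (0 : F) (cyclo α e f 0)) := by
    have := isPDS_iff_exists_subfield (hC ▸ coe_insert_zero_nthRootsFinset hf0) h0C (by omega)
    rwa [hcardC, hq] at this
  refine ⟨hiff, fun hPDS => ?_⟩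
  obtain ⟨S, hS⟩ := hiff.mp hPDS
  obtain ⟨r, hrβ, hr0, hSr⟩ := S.exists_dvd_card_eq_pow hp (hq.trans hpq)
  have hfr : f + 1 = p ^ r := by
    rw [← hSr, show Nat.card S = (S : Set F).ncard from Nat.card_coe_set_eq _, hS,
      Set.ncard_coe_finset, Finset.card_insert_of_notMem h0C, hcardC]
  have hrlt : r < beta :=
    (Nat.pow_lt_pow_iff_right hp.one_lt).mp (by rw [← hfr, ← hpq, hef]; nlinarith)
  refine ⟨hpq ▸ Nat.Prime.not_prime_pow (by omega), r, hrβ, hrlt.ne, hr0, by omega, ?_⟩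
  rw [← hfr, Nat.add_sub_cancel, hef, Nat.add_sub_cancel]

/-- Proposition: `C₀^e` is a `(q,f,f-1,0)`-PDS iff `C₀^e ∪ {0}` is a subfield of `GF(q)`;
in this case `q = p^β` is not prime, `f = p^r - 1` for a proper divisor `r` of `β`, and
`e(p^r - 1) = q - 1`. -/
theorem cyclo_pds_iff_subfield {F : Type*} [Field F] [Fintype F] [DecidableEq F]
    (q e f p beta : ℕ) (α : F)
    (hq : Fintype.card F = q) (hα : IsPrimitiveElt α)
    (hef : q = e * f + 1) (he : 1 < e) (hf : 1 < f)
    (hp : p.Prime) (hbeta : 0 < beta) (hpq : q = p ^ beta) :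
    (IsPDS q f ((f : ℤ) - 1) 0 (cyclo α e f 0) ↔
      ∃ S : Subfield F, (S : Set F) = ↑(insert (0 : F) (cyclo α e f 0))) ∧
    (IsPDS q f ((f : ℤ) - 1) 0 (cyclo α e f 0) →
      ¬ q.Prime ∧ ∃ r, r ∣ beta ∧ r ≠ beta ∧ 0 < r ∧
        f = p ^ r - 1 ∧ e * (p ^ r - 1) = q - 1) :=
  cyclo_pds_iff_subfield_general q e f p beta α hq hα hef he hf hp hpq
end
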